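/- arXiv:1208.5405 — 7 statements merged into one kernel-verified Lean document; each statement's English description precedes it below -/
import Mathlib

section
/- Let R, S, T be subsets of a metric space X with reference point o. If T ⊆ βS+b and S ⊆ αR+a (with α,β,a,b ≥ 0), then T ⊆ (α+αβ+β)R + (βa+a+b). -/
open Metric Set Bornology Filter

def cone {X : Type*} [MetricSpace X] (o : X) (R : Set X) (α a : ℝ) : Set X :=
  ⋃ x ∈ R, Metric.closedBall x (α * dist o x + a)

noncomputable def sPlus {X : Type*} [MetricSpace X] (o : X) (R S : Set X) : ℝ :=
  sInf {α : ℝ | 0 ≤ α ∧ ∃ a : ℝ, 0 ≤ a ∧ S ⊆ cone o R α a}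

noncomputable def sFun {X : Type*} [MetricSpace X] (o : X) (R S : Set X) : ℝ :=
  max (sPlus o R S) (sPlus o S R)

noncomputable def tFun {X : Type*} [MetricSpace X] (o : X) (R S : Set X) : ℝ :=
  Real.sqrt (sFun o R S)

theorem stmt1 {X : Type*} [MetricSpace X] (o : X) (R S T : Set X)
    (α β a b : ℝ) (hα : 0 ≤ α) (hβ : 0 ≤ β) (ha : 0 ≤ a) (hb : 0 ≤ b)
    (hT : T ⊆ cone o S β b) (hS : S ⊆ cone o R α a) :
    T ⊆ cone o R (α + α * β + β) (β * a + a + b) := by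
  intro t ht
  obtain ⟨s, hs, hts⟩ := by simpa [cone, mem_iUnion] using hT ht
  obtain ⟨r, hr, hsr⟩ := by simpa [cone, mem_iUnion] using hS hs
  simp only [cone, mem_iUnion, mem_closedBall]
  refine ⟨r, hr, ?_⟩
  have h1 : dist o s ≤ (1 + α) * dist o r + a := by
    have := dist_triangle o r s
    rw [dist_comm r s] at this
    nlinarith
  have h2 : dist t r ≤ dist t s + dist s r := dist_triangle t s r
  nlinarith [mul_le_mul_of_nonneg_left h1 hβ]
end

section
/- Let R, S be unbounded subsets of a metric space X with reference point o. Then s⁺(R,S) equals the infimum of all α ≥ 0 such that S \ U(o,r) ⊆ αR for some r ≥ 0, where U(o,r) is the open ball of radius r around o. -/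
open Metric Set Bornology Filter

theorem stmt3 {X : Type*} [MetricSpace X] (o : X) (R S : Set X)
    (hR : ¬ Bornology.IsBounded R) (hS : ¬ Bornology.IsBounded S) :
    sPlus o R S =
      sInf {α : ℝ | 0 ≤ α ∧ ∃ r : ℝ, 0 ≤ r ∧ S \ Metric.ball o r ⊆ cone o R α 0} := by
  have hRne : R.Nonempty := by
    rcases R.eq_empty_or_nonempty with h | h
    · exact absurd (h ▸ Bornology.isBounded_empty) hR
    · exact h
  obtain ⟨x₀, hx₀⟩ := hRne
  set A := {α : ℝ | 0 ≤ α ∧ ∃ a : ℝ, 0 ≤ a ∧ S ⊆ cone o R α a} with hA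
  set B := {α : ℝ | 0 ≤ α ∧ ∃ r : ℝ, 0 ≤ r ∧ S \ Metric.ball o r ⊆ cone o R α 0} with hB
  have hBA : B ⊆ A := by
    rintro α ⟨hα, r, hr, hsub⟩
    refine ⟨hα, r + dist o x₀, by positivity, fun s hs => ?_⟩
    by_cases hball : s ∈ Metric.ball o r
    · refine mem_iUnion₂.2 ⟨x₀, hx₀, ?_⟩
      simp only [Metric.mem_closedBall]
      have h1 : dist s x₀ ≤ dist s o + dist o x₀ := dist_triangle _ _ _
      have h2 : dist s o < r := mem_ball.1 hball
      nlinarith [dist_nonneg (x := o) (y := x₀),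
        mul_nonneg hα (dist_nonneg (x := o) (y := x₀))]
    · have hmem := hsub ⟨hs, hball⟩
      rcases mem_iUnion₂.1 hmem with ⟨x, hx, hdx⟩
      refine mem_iUnion₂.2 ⟨x, hx, ?_⟩
      simp only [Metric.mem_closedBall] at hdx ⊢
      have h0 : (0:ℝ) ≤ r + dist o x₀ := by positivity
      linarith
  have key : ∀ α ∈ A, ∀ ε > 0, α + ε ∈ B := by
    rintro α ⟨hα, a, ha, hsub⟩ ε hε
    refine ⟨by linarith, a + (1 + α) * a / ε, by positivity, ?_⟩
    rintro s ⟨hsS, hsb⟩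
    rcases mem_iUnion₂.1 (hsub hsS) with ⟨x, hx, hdx⟩
    simp only [Metric.mem_closedBall] at hdx
    refine mem_iUnion₂.2 ⟨x, hx, ?_⟩
    simp only [Metric.mem_closedBall, add_zero]
    have hso : a + (1 + α) * a / ε ≤ dist s o := not_lt.1 (fun h => hsb (mem_ball.2 h))
    have h1 : dist s o ≤ dist s x + dist x o := dist_triangle _ _ _
    have h2 : dist x o = dist o x := dist_comm _ _
    have hd : a ≤ ε * dist o x := by
      have hdiv : (1 + α) * a / ε * ε = (1 + α) * a := by field_simp
      nlinarith [dist_nonneg (x := o) (y := x)]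
    linarith
  have hlb : ∀ x ∈ A, (0:ℝ) ≤ x := fun x hx => hx.1
  have hlbB : ∀ x ∈ B, (0:ℝ) ≤ x := fun x hx => hx.1
  have hsp : sPlus o R S = sInf A := rfl
  rw [hsp]
  apply le_antisymm
  · rcases B.eq_empty_or_nonempty with hBe | hBne
    · rcases A.eq_empty_or_nonempty with hAe | ⟨α, hαA⟩
      · rw [hAe, hBe]
      · exact absurd (key α hαA 1 one_pos) (by rw [hBe]; exact notMem_empty _)
    · exact csInf_le_csInf ⟨0, hlb⟩ hBne hBA
  · rcases A.eq_empty_or_nonempty with hAe | hAne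
    · have hBe : B = ∅ := eq_empty_of_subset_empty (hAe ▸ hBA)
      rw [hAe, hBe]
    · refine le_csInf hAne fun α hαA => ?_
      refine le_of_forall_pos_le_add fun ε hε => ?_
      exact csInf_le ⟨0, hlbB⟩ (key α hαA ε hε)
end

section
/- For unbounded subsets R, S, T of a metric space X, the function s⁺ satisfies: s⁺(R,S) ∈ [0,1], s⁺(R,R) = 0, and the weak triangle inequality s⁺(R,T) ≤ s⁺(R,S) + s⁺(R,S)·s⁺(S,T) + s⁺(S,T). -/
open Metric Set Bornology Filter

lemma myUnbdd {X : Type*} [MetricSpace X] (o : X) {R : Set X}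
    (hR : ¬ Bornology.IsBounded R) (r : ℝ) : ∃ x ∈ R, r < dist o x := by
  by_contra h
  push_neg at h
  exact hR ((isBounded_closedBall (x := o) (r := r)).subset
    (fun x hx => by simpa [mem_closedBall, dist_comm] using h x hx))

lemma mem_cone_iff {X : Type*} [MetricSpace X] (o : X) (R : Set X) (α a : ℝ) (t : X) :
    t ∈ cone o R α a ↔ ∃ x ∈ R, dist t x ≤ α * dist o x + a := by
  simp [cone, mem_iUnion, mem_closedBall]

lemma one_lt_memA {X : Type*} [MetricSpace X] (o : X) {R : Set X} (S : Set X)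
    (hR : ¬ Bornology.IsBounded R) {α : ℝ} (hα : 1 < α) :
    α ∈ {α : ℝ | 0 ≤ α ∧ ∃ a : ℝ, 0 ≤ a ∧ S ⊆ cone o R α a} := by
  refine ⟨le_of_lt (lt_trans one_pos hα), 0, le_refl 0, fun s hs => ?_⟩
  obtain ⟨x, hxR, hx⟩ := myUnbdd o hR (dist o s / (α - 1))
  rw [mem_cone_iff]
  refine ⟨x, hxR, ?_⟩
  have h1 : dist o s ≤ (α - 1) * dist o x := by
    rw [div_lt_iff₀ (by linarith)] at hx
    linarith
  have h2 : dist s x ≤ dist s o + dist o x := dist_triangle s o x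
  rw [dist_comm s o] at h2
  linarith

lemma memA_nonempty {X : Type*} [MetricSpace X] (o : X) {R : Set X} (S : Set X)
    (hR : ¬ Bornology.IsBounded R) :
    Set.Nonempty {α : ℝ | 0 ≤ α ∧ ∃ a : ℝ, 0 ≤ a ∧ S ⊆ cone o R α a} :=
  ⟨2, one_lt_memA o S hR one_lt_two⟩

lemma memA_bdd {X : Type*} [MetricSpace X] (o : X) (R S : Set X) :
    BddBelow {α : ℝ | 0 ≤ α ∧ ∃ a : ℝ, 0 ≤ a ∧ S ⊆ cone o R α a} :=
  ⟨0, fun x hx => hx.1⟩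

lemma sPlus_nonneg {X : Type*} [MetricSpace X] (o : X) (R S : Set X) :
    0 ≤ sPlus o R S :=
  Real.sInf_nonneg (fun x hx => hx.1)

theorem stmt4 {X : Type*} [MetricSpace X] (o : X) (R S T : Set X)
    (hR : ¬ Bornology.IsBounded R) (hS : ¬ Bornology.IsBounded S)
    (hT : ¬ Bornology.IsBounded T) :
    0 ≤ sPlus o R S ∧ sPlus o R S ≤ 1 ∧ sPlus o R R = 0 ∧
      sPlus o R T ≤ sPlus o R S + sPlus o R S * sPlus o S T + sPlus o S T := by
  refine ⟨sPlus_nonneg o R S, ?_, ?_, ?_⟩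
  · -- sPlus ≤ 1
    apply le_of_forall_pos_le_add
    intro ε hε
    exact csInf_le (memA_bdd o R S) (one_lt_memA o S hR (by linarith))
  · -- sPlus o R R = 0
    refine le_antisymm ?_ (sPlus_nonneg o R R)
    apply csInf_le (memA_bdd o R R)
    refine ⟨le_refl 0, 0, le_refl 0, fun x hx => ?_⟩
    rw [mem_cone_iff]
    exact ⟨x, hx, by simp⟩
  · -- triangle inequality
    set α := sPlus o R S with hαdef
    set β := sPlus o S T with hβdef
    have hα0 : 0 ≤ α := sPlus_nonneg o R S
    have hβ0 : 0 ≤ β := sPlus_nonneg o S T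
    apply le_of_forall_pos_le_add
    intro δ hδ
    set ε : ℝ := min 1 (δ / (3 + α + β)) with hεdef
    have hden : 0 < 3 + α + β := by linarith
    have hε : 0 < ε := lt_min one_pos (div_pos hδ hden)
    have hε1 : ε ≤ 1 := min_le_left _ _
    -- pick α' ∈ A(R,S) with α' < α + ε
    obtain ⟨α', hα'A, hα'lt⟩ := Real.lt_sInf_add_pos (memA_nonempty o S hR) hε
    obtain ⟨β', hβ'A, hβ'lt⟩ := Real.lt_sInf_add_pos (memA_nonempty o T hS) hε
    have hα'lt2 : α' < α + ε := hα'lt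
    have hβ'lt2 : β' < β + ε := hβ'lt
    obtain ⟨hα'0, a, ha0, hSsub⟩ := hα'A
    obtain ⟨hβ'0, b, hb0, hTsub⟩ := hβ'A
    -- show α' + β' + α'*β' ∈ A(R,T)
    have key : sPlus o R T ≤ α' + α' * β' + β' := by
      apply csInf_le (memA_bdd o R T)
      refine ⟨by positivity, a + b + β' * a, by positivity, fun t ht => ?_⟩
      obtain ⟨y, hyS, hy⟩ := (mem_cone_iff o S β' b t).mp (hTsub ht)
      obtain ⟨x, hxR, hx⟩ := (mem_cone_iff o R α' a y).mp (hSsub hyS)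
      rw [mem_cone_iff]
      refine ⟨x, hxR, ?_⟩
      have h1 : dist o y ≤ dist o x + dist x y := dist_triangle o x y
      rw [dist_comm x y] at h1
      have h2 : dist t x ≤ dist t y + dist y x := dist_triangle t y x
      have h3 : dist o y ≤ (1 + α') * dist o x + a := by linarith
      have h4 : dist t y ≤ β' * ((1 + α') * dist o x + a) + b :=
        le_trans hy (by nlinarith [dist_nonneg (x := o) (y := y)])
      nlinarith [dist_nonneg (x := o) (y := x)]
    have hmono : α' + α' * β' + β' ≤ (α + ε) + (α + ε) * (β + ε) + (β + ε) := by
      nlinarith [hα'lt2, hβ'lt2]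
    have hεbound : (α + ε) + (α + ε) * (β + ε) + (β + ε) ≤ α + α * β + β + δ := by
      have h5 : ε ≤ δ / (3 + α + β) := min_le_right _ _
      have h6 : ε * (3 + α + β) ≤ δ := (le_div_iff₀ hden).mp h5
      nlinarith
    linarith
end

section
/- Let f : X → Y be a q-quasi-isometry between metric spaces, with reference points o ∈ X and f(o) ∈ Y. If R, S are unbounded subsets of X, then f(R), f(S) are unbounded subsets of Y and q⁻² · s⁺_X(R,S) ≤ s⁺_Y(f(R), f(S)) ≤ q² · s⁺_X(R,S). -/
open Metric Set Bornology Filter Pointwise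

lemma inv_bound (q : ℝ) (hq : 0 < q) {d D : ℝ} (h : q⁻¹ * d - q ≤ D) :
    d ≤ q * D + q ^ 2 := by
  have h' : q * (q⁻¹ * d) ≤ q * (D + q) :=
    mul_le_mul_of_nonneg_left (by linarith) hq.le
  rw [← mul_assoc, mul_inv_cancel₀ hq.ne', one_mul] at h'
  nlinarith

lemma sInf_le_mul_sInf_aux (c : ℝ) (hc : 0 ≤ c) (A B : Set ℝ)
    (hB0 : ∀ b ∈ B, 0 ≤ b) (h : ∀ a ∈ A, c * a ∈ B)
    (hne : B.Nonempty → A.Nonempty) : sInf B ≤ c * sInf A := by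
  rcases A.eq_empty_or_nonempty with hA | hA
  · have hB : B = ∅ := by
      rcases B.eq_empty_or_nonempty with hB | hB
      · exact hB
      · exact absurd (hne hB) (by simp [hA])
    simp [hA, hB, Real.sInf_empty]
  · have hsub : c • A ⊆ B := by
      rintro _ ⟨a, ha, rfl⟩
      simpa [smul_eq_mul] using h a ha
    have h1 : sInf B ≤ sInf (c • A) :=
      csInf_le_csInf ⟨0, fun b hb => hB0 b hb⟩ (hA.smul_set) hsub
    rw [Real.sInf_smul_of_nonneg hc] at h1
    simpa [smul_eq_mul] using h1

lemma cone_forward {X Y : Type*} [MetricSpace X] [MetricSpace Y]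
    (f : X → Y) (q : ℝ) (hq : 0 < q)
    (hlow : ∀ x x' : X, q⁻¹ * dist x x' - q ≤ dist (f x) (f x'))
    (hupp : ∀ x x' : X, dist (f x) (f x') ≤ q * dist x x' + q)
    (o : X) (R S : Set X) {α a : ℝ} (hα : 0 ≤ α)
    (h : S ⊆ cone o R α a) :
    f '' S ⊆ cone (f o) (f '' R) (q ^ 2 * α) (q ^ 3 * α + q * a + q) := by
  rintro _ ⟨s, hs, rfl⟩
  obtain ⟨x, hx, hdist⟩ : ∃ x ∈ R, dist s x ≤ α * dist o x + a := by
    have := h hs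
    simpa [cone, Metric.mem_closedBall] using this
  refine mem_iUnion₂.2 ⟨f x, ⟨x, hx, rfl⟩, ?_⟩
  rw [Metric.mem_closedBall]
  have h1 : dist (f s) (f x) ≤ q * dist s x + q := hupp s x
  have hq1 : q * q⁻¹ = 1 := mul_inv_cancel₀ hq.ne'
  have h2 : dist o x ≤ q * dist (f o) (f x) + q ^ 2 := inv_bound q hq (hlow o x)
  nlinarith [mul_le_mul_of_nonneg_left h2 (mul_nonneg (mul_pos hq hq).le hα),
    mul_le_mul_of_nonneg_left hdist hq.le]

lemma cone_backward {X Y : Type*} [MetricSpace X] [MetricSpace Y]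
    (f : X → Y) (q : ℝ) (hq : 0 < q)
    (hlow : ∀ x x' : X, q⁻¹ * dist x x' - q ≤ dist (f x) (f x'))
    (hupp : ∀ x x' : X, dist (f x) (f x') ≤ q * dist x x' + q)
    (o : X) (R S : Set X) {α a : ℝ} (hα : 0 ≤ α)
    (h : f '' S ⊆ cone (f o) (f '' R) α a) :
    S ⊆ cone o R (q ^ 2 * α) (q ^ 2 * α + q * a + q ^ 2) := by
  intro s hs
  obtain ⟨y, ⟨x, hx, rfl⟩, hdist⟩ :
      ∃ y ∈ f '' R, dist (f s) y ≤ α * dist (f o) y + a := by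
    have := h (mem_image_of_mem f hs)
    simpa [cone, Metric.mem_closedBall] using this
  refine mem_iUnion₂.2 ⟨x, hx, ?_⟩
  rw [Metric.mem_closedBall]
  have hq1 : q * q⁻¹ = 1 := mul_inv_cancel₀ hq.ne'
  have h1 : dist s x ≤ q * dist (f s) (f x) + q ^ 2 := inv_bound q hq (hlow s x)
  have h2 : dist (f o) (f x) ≤ q * dist o x + q := hupp o x
  nlinarith [mul_le_mul_of_nonneg_left h2 (mul_nonneg (mul_pos hq hq).le hα),
    mul_le_mul_of_nonneg_left hdist hq.le]

lemma unb_image {X Y : Type*} [MetricSpace X] [MetricSpace Y]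
    (f : X → Y) (q : ℝ) (hq : 0 < q)
    (hlow : ∀ x x' : X, q⁻¹ * dist x x' - q ≤ dist (f x) (f x'))
    (R : Set X) (hR : ¬ Bornology.IsBounded R) : ¬ Bornology.IsBounded (f '' R) := by
  intro hB
  apply hR
  rw [Metric.isBounded_iff] at hB ⊢
  obtain ⟨C, hC⟩ := hB
  refine ⟨q * (C + q), fun x hx y hy => ?_⟩
  have h1 := inv_bound q hq (hlow x y)
  have h2 := hC (mem_image_of_mem f hx) (mem_image_of_mem f hy)
  nlinarith

theorem stmt9 {X Y : Type*} [MetricSpace X] [MetricSpace Y]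
    (f : X → Y) (q : ℝ) (hq : 0 < q)
    (hlow : ∀ x x' : X, q⁻¹ * dist x x' - q ≤ dist (f x) (f x'))
    (hupp : ∀ x x' : X, dist (f x) (f x') ≤ q * dist x x' + q)
    (hcobdd : ∀ y : Y, ∃ x : X, dist y (f x) ≤ q)
    (o : X) (R S : Set X)
    (hR : ¬ Bornology.IsBounded R) (hS : ¬ Bornology.IsBounded S) :
    ¬ Bornology.IsBounded (f '' R) ∧ ¬ Bornology.IsBounded (f '' S) ∧
      q⁻¹ ^ 2 * sPlus o R S ≤ sPlus (f o) (f '' R) (f '' S) ∧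
      sPlus (f o) (f '' R) (f '' S) ≤ q ^ 2 * sPlus o R S := by
  have hq2 : (0:ℝ) < q ^ 2 := by positivity
  set AX := {α : ℝ | 0 ≤ α ∧ ∃ a : ℝ, 0 ≤ a ∧ S ⊆ cone o R α a} with hAX
  set AY := {α : ℝ | 0 ≤ α ∧ ∃ a : ℝ, 0 ≤ a ∧ f '' S ⊆ cone (f o) (f '' R) α a} with hAY
  have hfwd : ∀ α ∈ AX, q ^ 2 * α ∈ AY := by
    rintro α ⟨hα, a, ha, hsub⟩
    exact ⟨by positivity, q ^ 3 * α + q * a + q, by positivity,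
      cone_forward f q hq hlow hupp o R S hα hsub⟩
  have hbwd : ∀ α ∈ AY, q ^ 2 * α ∈ AX := by
    rintro α ⟨hα, a, ha, hsub⟩
    exact ⟨by positivity, q ^ 2 * α + q * a + q ^ 2, by positivity,
      cone_backward f q hq hlow hupp o R S hα hsub⟩
  have hupper : sInf AY ≤ q ^ 2 * sInf AX := by
    refine sInf_le_mul_sInf_aux _ hq2.le _ _ (fun b hb => hb.1) hfwd ?_
    rintro ⟨β, hβ⟩
    exact ⟨q ^ 2 * β, hbwd β hβ⟩
  have hlower : sInf AX ≤ q ^ 2 * sInf AY := by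
    refine sInf_le_mul_sInf_aux _ hq2.le _ _ (fun b hb => hb.1) hbwd ?_
    rintro ⟨β, hβ⟩
    exact ⟨q ^ 2 * β, hfwd β hβ⟩
  refine ⟨unb_image f q hq hlow R hR, unb_image f q hq hlow S hS, ?_, ?_⟩
  · show q⁻¹ ^ 2 * sInf AX ≤ sInf AY
    have := mul_le_mul_of_nonneg_left hlower (by positivity : (0:ℝ) ≤ q⁻¹ ^ 2)
    calc q⁻¹ ^ 2 * sInf AX ≤ q⁻¹ ^ 2 * (q ^ 2 * sInf AY) := this
      _ = sInf AY := by field_simp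
  · exact hupper
end

section
/- Let X be a complete CAT(0) space with base point o. For boundary points ξ, ζ at infinity, let R_ξ, R_ζ be the images of the unique geodesic rays from o in the classes ξ, ζ. Then s(R_ξ, R_ζ) ≤ 2·sin(∠(ξ,ζ)/2) ≤ 4·s(R_ξ, R_ζ), where ∠ is the angular metric. -/
open Metric Set Bornology Filter

section Aux

variable {X : Type*} [MetricSpace X] (o : X) (c₁ c₂ : ℝ → X)

lemma aux_dist_o (hc₁o : c₁ 0 = o)
    (hc₁ : ∀ x y : ℝ, 0 ≤ x → 0 ≤ y → dist (c₁ x) (c₁ y) = |x - y|)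
    {x : ℝ} (hx : 0 ≤ x) : dist o (c₁ x) = x := by
  rw [dist_comm, ← hc₁o, hc₁ x 0 hx le_rfl]
  simpa using abs_of_nonneg hx

lemma aux_mem (hc₁o : c₁ 0 = o) (hc₂o : c₂ 0 = o)
    (hc₁ : ∀ x y : ℝ, 0 ≤ x → 0 ≤ y → dist (c₁ x) (c₁ y) = |x - y|)
    (hc₂ : ∀ x y : ℝ, 0 ≤ x → 0 ≤ y → dist (c₂ x) (c₂ y) = |x - y|)
    (L : ℝ)
    (hL : Filter.Tendsto (fun x : ℝ => dist (c₁ x) (c₂ x) / x) Filter.atTop (nhds L))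
    (hL0 : 0 ≤ L) {ε : ℝ} (hε : 0 < ε) :
    (L + ε) ∈ {α : ℝ | 0 ≤ α ∧ ∃ a : ℝ, 0 ≤ a ∧
      (c₂ '' Set.Ici 0) ⊆ cone o (c₁ '' Set.Ici 0) α a} := by
  have hev : ∀ᶠ x in atTop, dist (c₁ x) (c₂ x) / x ≤ L + ε := by
    filter_upwards [hL.eventually (eventually_le_nhds (by linarith : L < L + ε))] with x hx
    exact hx
  obtain ⟨M, hM⟩ := eventually_atTop.mp hev
  set M' : ℝ := max M 1 with hM'
  have hM'1 : (1 : ℝ) ≤ M' := le_max_right _ _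
  refine ⟨by linarith, 2 * M', by linarith, ?_⟩
  rintro p ⟨x, hx, rfl⟩
  have hx0 : (0 : ℝ) ≤ x := hx
  have hd1 : dist o (c₁ x) = x := aux_dist_o o c₁ hc₁o hc₁ hx0
  have hd2 : dist o (c₂ x) = x := aux_dist_o o c₂ hc₂o hc₂ hx0
  have hkey : dist (c₂ x) (c₁ x) ≤ (L + ε) * x + 2 * M' := by
    rcases le_or_gt M' x with h | h
    · have hxpos : 0 < x := lt_of_lt_of_le (by linarith) h
      have := hM x (le_trans (le_max_left _ _) h)
      rw [div_le_iff₀ hxpos] at this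
      rw [dist_comm]
      linarith
    · have : dist (c₂ x) (c₁ x) ≤ 2 * x := by
        calc dist (c₂ x) (c₁ x) ≤ dist (c₂ x) o + dist o (c₁ x) := dist_triangle _ _ _
        _ = 2 * x := by rw [dist_comm (c₂ x) o, hd1, hd2]; ring
      nlinarith
  simp only [cone, mem_iUnion]
  exact ⟨c₁ x, ⟨x, hx, rfl⟩, by rw [mem_closedBall, hd1]; exact hkey⟩

lemma aux_le (hc₁o : c₁ 0 = o) (hc₂o : c₂ 0 = o)
    (hc₁ : ∀ x y : ℝ, 0 ≤ x → 0 ≤ y → dist (c₁ x) (c₁ y) = |x - y|)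
    (hc₂ : ∀ x y : ℝ, 0 ≤ x → 0 ≤ y → dist (c₂ x) (c₂ y) = |x - y|)
    (L : ℝ)
    (hL : Filter.Tendsto (fun x : ℝ => dist (c₁ x) (c₂ x) / x) Filter.atTop (nhds L))
    {α a : ℝ} (hα : 0 ≤ α) (ha : 0 ≤ a)
    (hsub : (c₂ '' Set.Ici 0) ⊆ cone o (c₁ '' Set.Ici 0) α a) :
    L ≤ 4 * α := by
  rcases le_or_gt (1/2 : ℝ) α with hhalf | hhalf
  · -- trivial case: L ≤ 2 ≤ 4α
    have hL2 : L ≤ 2 := by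
      refine le_of_tendsto hL ?_
      filter_upwards [eventually_ge_atTop (1 : ℝ)] with x hx
      have hxpos : (0 : ℝ) < x := by linarith
      have hd1 : dist o (c₁ x) = x := aux_dist_o o c₁ hc₁o hc₁ (le_of_lt hxpos)
      have hd2 : dist o (c₂ x) = x := aux_dist_o o c₂ hc₂o hc₂ (le_of_lt hxpos)
      have : dist (c₁ x) (c₂ x) ≤ 2 * x := by
        calc dist (c₁ x) (c₂ x) ≤ dist (c₁ x) o + dist o (c₂ x) := dist_triangle _ _ _
        _ = 2 * x := by rw [dist_comm (c₁ x) o, hd1, hd2]; ring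
      rw [div_le_iff₀ hxpos]; linarith
    linarith
  · have h1α : (0 : ℝ) < 1 - α := by linarith
    set K : ℝ := 2 * α / (1 - α) with hK
    set C : ℝ := (2 * α * a + 2 * a * (1 - α)) / (1 - α) with hC
    have hbound : ∀ x : ℝ, 0 ≤ x → dist (c₁ x) (c₂ x) ≤ K * x + C := by
      intro x hx
      obtain ⟨z, hz, hball⟩ := by
        simpa only [cone, mem_iUnion] using hsub ⟨x, hx, rfl⟩
      obtain ⟨y, hy, rfl⟩ := hz
      have hy0 : (0 : ℝ) ≤ y := hy
      have hd1 : dist o (c₁ y) = y := aux_dist_o o c₁ hc₁o hc₁ hy0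
      have hd2 : dist o (c₂ x) = x := aux_dist_o o c₂ hc₂o hc₂ hx
      rw [mem_closedBall, hd1] at hball
      -- |y - x| ≤ dist (c₁ y) (c₂ x) ≤ α y + a
      have habs : |y - x| ≤ α * y + a := by
        have := abs_dist_sub_le (c₁ y) (c₂ x) o
        rw [dist_comm (c₁ y) o, dist_comm (c₂ x) o, hd1, hd2, dist_comm (c₁ y) (c₂ x)] at this
        exact le_trans this hball
      have h1 : y - x ≤ α * y + a := le_trans (le_abs_self _) habs
      have hdd : dist (c₁ x) (c₂ x) ≤ 2 * (α * y + a) := by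
        calc dist (c₁ x) (c₂ x) ≤ dist (c₁ x) (c₁ y) + dist (c₁ y) (c₂ x) := dist_triangle _ _ _
        _ ≤ |x - y| + (α * y + a) := add_le_add (le_of_eq (hc₁ x y hx hy0)) (by rwa [dist_comm])
        _ ≤ (α * y + a) + (α * y + a) := by
            refine add_le_add ?_ le_rfl
            rw [abs_sub_comm]; exact habs
        _ = 2 * (α * y + a) := by ring
      have hyx : y * (1 - α) ≤ a + x := by linarith
      have : dist (c₁ x) (c₂ x) * (1 - α) ≤ 2 * α * (a + x) + 2 * a * (1 - α) := by
        nlinarith [dist_nonneg (x := c₁ x) (y := c₂ x)]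
      have heq : K * x + C = (2 * α * (a + x) + 2 * a * (1 - α)) / (1 - α) := by
        rw [hK, hC]; field_simp; ring
      rw [heq, le_div_iff₀ h1α]
      exact this
    have hC0 : 0 ≤ C := by
      rw [hC]
      apply div_nonneg _ (le_of_lt h1α)
      nlinarith
    have hlim : Tendsto (fun x : ℝ => K + C * x⁻¹) atTop (nhds K) := by
      have : Tendsto (fun x : ℝ => C * x⁻¹) atTop (nhds 0) := by
        simpa using tendsto_inv_atTop_zero.const_mul C
      simpa using tendsto_const_nhds.add this
    have hLK : L ≤ K := by
      refine le_of_tendsto_of_tendsto hL hlim ?_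
      filter_upwards [eventually_gt_atTop (0 : ℝ)] with x hx
      have := hbound x (le_of_lt hx)
      rw [div_le_iff₀ hx]
      calc dist (c₁ x) (c₂ x) ≤ K * x + C := this
      _ = (K + C * x⁻¹) * x := by field_simp
    -- K ≤ 4α
    have : K ≤ 4 * α := by
      rw [hK, div_le_iff₀ h1α]
      nlinarith
    linarith

end Aux

/-- Comparison of `s` with the angular metric on the boundary at infinity of a
complete CAT(0) space: `c₁`, `c₂` are the geodesic rays from `o` representing two
boundary points `ξ`, `ζ`, and `L = 2 sin(∠(ξ,ζ)/2)` is characterized by the limit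
`L = lim_{x→∞} d(c₁(x), c₂(x))/x`. -/
theorem stmt11 {X : Type*} [MetricSpace X] [CompleteSpace X]
    (o : X) (c₁ c₂ : ℝ → X) (hc₁o : c₁ 0 = o) (hc₂o : c₂ 0 = o)
    (hc₁ : ∀ x y : ℝ, 0 ≤ x → 0 ≤ y → dist (c₁ x) (c₁ y) = |x - y|)
    (hc₂ : ∀ x y : ℝ, 0 ≤ x → 0 ≤ y → dist (c₂ x) (c₂ y) = |x - y|)
    (L : ℝ)
    (hL : Filter.Tendsto (fun x : ℝ => dist (c₁ x) (c₂ x) / x) Filter.atTop (nhds L)) :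
    sFun o (c₁ '' Set.Ici 0) (c₂ '' Set.Ici 0) ≤ L ∧
      L ≤ 4 * sFun o (c₁ '' Set.Ici 0) (c₂ '' Set.Ici 0) := by
  have hL' : Filter.Tendsto (fun x : ℝ => dist (c₂ x) (c₁ x) / x) Filter.atTop (nhds L) := by
    simpa [dist_comm] using hL
  have hL0 : 0 ≤ L := by
    refine ge_of_tendsto hL ?_
    filter_upwards [eventually_ge_atTop (0 : ℝ)] with x hx
    exact div_nonneg dist_nonneg hx
  have hbdd : ∀ (R S : Set X), BddBelow {α : ℝ | 0 ≤ α ∧ ∃ a : ℝ, 0 ≤ a ∧ S ⊆ cone o R α a} :=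
    fun R S => ⟨0, fun α hα => hα.1⟩
  have hmem₁ : ∀ ε : ℝ, 0 < ε → (L + ε) ∈ {α : ℝ | 0 ≤ α ∧ ∃ a : ℝ, 0 ≤ a ∧
      (c₂ '' Set.Ici 0) ⊆ cone o (c₁ '' Set.Ici 0) α a} :=
    fun ε hε => aux_mem o c₁ c₂ hc₁o hc₂o hc₁ hc₂ L hL hL0 hε
  have hmem₂ : ∀ ε : ℝ, 0 < ε → (L + ε) ∈ {α : ℝ | 0 ≤ α ∧ ∃ a : ℝ, 0 ≤ a ∧
      (c₁ '' Set.Ici 0) ⊆ cone o (c₂ '' Set.Ici 0) α a} :=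
    fun ε hε => aux_mem o c₂ c₁ hc₂o hc₁o hc₂ hc₁ L hL' hL0 hε
  constructor
  · apply max_le
    · apply le_of_forall_pos_le_add
      intro ε hε
      exact csInf_le (hbdd _ _) (hmem₁ ε hε)
    · apply le_of_forall_pos_le_add
      intro ε hε
      exact csInf_le (hbdd _ _) (hmem₂ ε hε)
  · have h4 : L / 4 ≤ sPlus o (c₁ '' Set.Ici 0) (c₂ '' Set.Ici 0) := by
      apply le_csInf ⟨L + 1, hmem₁ 1 one_pos⟩
      rintro α ⟨hα0, a, ha0, hsub⟩
      have := aux_le o c₁ c₂ hc₁o hc₂o hc₁ hc₂ L hL hα0 ha0 hsub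
      linarith
    have : sPlus o (c₁ '' Set.Ici 0) (c₂ '' Set.Ici 0)
        ≤ sFun o (c₁ '' Set.Ici 0) (c₂ '' Set.Ici 0) := le_max_left _ _
    unfold sFun at *
    linarith
end

section
/- In ℝⁿ with the Euclidean (ℓ²) metric and reference point 0, for nonzero vectors x, y ∈ ℝⁿ with half-lines H_x = {λx : λ ≥ 0} and H_y = {λy : λ ≥ 0}, one has s(H_x, H_y) = sin(min{π/2, θ}), where θ is the angle between H_x and H_y. -/
open Metric Set Bornology Filter

set_option maxHeartbeats 1000000 in
open InnerProductGeometry RealInnerProductSpace in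
lemma key {E : Type*} [NormedAddCommGroup E] [InnerProductSpace ℝ E]
    (x y : E) (hx : x ≠ 0) (hy : y ≠ 0) :
    sPlus (0 : E) {p | ∃ l : ℝ, 0 ≤ l ∧ p = l • x} {p | ∃ l : ℝ, 0 ≤ l ∧ p = l • y}
      = Real.sin (min (Real.pi / 2) (angle x y)) := by
  have hxn : (0:ℝ) < ‖x‖ := norm_pos_iff.mpr hx
  have hyn : (0:ℝ) < ‖y‖ := norm_pos_iff.mpr hy
  obtain ⟨θ, hθ⟩ : ∃ t : ℝ, t = angle x y := ⟨_, rfl⟩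
  obtain ⟨c, hc⟩ : ∃ t : ℝ, t = Real.cos θ := ⟨_, rfl⟩
  obtain ⟨s, hsdef⟩ : ∃ t : ℝ, t = Real.sin (min (Real.pi / 2) θ) := ⟨_, rfl⟩
  rw [← hθ, ← hsdef]
  have hθ0 : 0 ≤ θ := hθ ▸ angle_nonneg x y
  have hθπ : θ ≤ Real.pi := hθ ▸ angle_le_pi x y
  have hc1 : c ≤ 1 := hc ▸ Real.cos_le_one θ
  have hcm1 : -1 ≤ c := hc ▸ Real.neg_one_le_cos θ
  have hs0 : 0 ≤ s := hsdef ▸ Real.sin_nonneg_of_nonneg_of_le_pi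
    (le_min (by positivity) hθ0) (min_le_of_left_le (by linarith [Real.pi_pos]))
  have hs1 : s ≤ 1 := hsdef ▸ Real.sin_le_one _
  have hinner : (inner ℝ x y : ℝ) = c * (‖x‖ * ‖y‖) := by
    have h := cos_angle x y
    rw [← hθ, ← hc] at h
    rw [h]; field_simp
  have hdist : ∀ l m : ℝ, dist (l • y) (m • x) ^ 2
      = (l*‖y‖)^2 - 2*(l*‖y‖)*(m*‖x‖)*c + (m*‖x‖)^2 := by
    intro l m
    rw [dist_eq_norm, @norm_sub_sq_real, real_inner_smul_left, real_inner_smul_right,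
      real_inner_comm, hinner, norm_smul, norm_smul, Real.norm_eq_abs, Real.norm_eq_abs,
      mul_pow, mul_pow, sq_abs, sq_abs]
    ring
  have hdist0 : ∀ m : ℝ, 0 ≤ m → dist (0:E) (m • x) = m * ‖x‖ := by
    intro m hm
    rw [dist_zero_left, norm_smul, Real.norm_eq_abs, abs_of_nonneg hm]
  have hcase1 : 0 ≤ c → s ^ 2 + c ^ 2 = 1 := by
    intro h
    have hle : θ ≤ Real.pi / 2 := by
      by_contra hgt
      push_neg at hgt
      have h2 := Real.cos_neg_of_pi_div_two_lt_of_lt hgt (by linarith [Real.pi_pos])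
      rw [← hc] at h2; linarith
    rw [hsdef, hc, min_eq_right hle]
    exact Real.sin_sq_add_cos_sq θ
  have hcase2 : c ≤ 0 → s = 1 := by
    intro h
    have hge : Real.pi / 2 ≤ θ := by
      by_contra hlt
      push_neg at hlt
      have h2 := Real.cos_pos_of_mem_Ioo ⟨by linarith [Real.pi_pos], hlt⟩
      rw [← hc] at h2; linarith
    rw [hsdef, min_eq_left hge, Real.sin_pi_div_two]
  have hcone : ∀ (α a : ℝ) (p : E),
      p ∈ cone (0:E) {p | ∃ l : ℝ, 0 ≤ l ∧ p = l • x} α a ↔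
        ∃ m : ℝ, 0 ≤ m ∧ dist p (m • x) ≤ α * (m * ‖x‖) + a := by
    intro α a p
    simp only [cone, mem_iUnion, mem_closedBall, exists_prop, mem_setOf_eq]
    constructor
    · rintro ⟨z, ⟨m, hm, rfl⟩, hz⟩
      exact ⟨m, hm, by rwa [hdist0 m hm] at hz⟩
    · rintro ⟨m, hm, h⟩
      exact ⟨m • x, ⟨m, hm, rfl⟩, by rwa [hdist0 m hm]⟩
  have hsqle : ∀ d r : ℝ, 0 ≤ d → 0 ≤ r → d ^ 2 ≤ r ^ 2 → d ≤ r := by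
    intro d r hd hr h; nlinarith
  -- membership of s + ε
  have hmem : ∀ ε : ℝ, 0 < ε → (s + ε) ∈
      {α : ℝ | 0 ≤ α ∧ ∃ a : ℝ, 0 ≤ a ∧
        {p : E | ∃ l : ℝ, 0 ≤ l ∧ p = l • y} ⊆
          cone (0:E) {p | ∃ l : ℝ, 0 ≤ l ∧ p = l • x} α a} := by
    intro ε hε
    refine ⟨by linarith, 0, le_refl 0, ?_⟩
    rintro p ⟨l, hl, rfl⟩
    rw [hcone]
    rcases lt_or_ge 0 c with hcpos | hcle
    · -- use m with m‖x‖ = L/c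
      set L := l * ‖y‖ with hL
      have hL0 : 0 ≤ L := by positivity
      refine ⟨L / (c * ‖x‖), by positivity, ?_⟩
      set m := L / (c * ‖x‖) with hm
      have ht0 : 0 ≤ m * ‖x‖ := by positivity
      have htc : (m * ‖x‖) * c = L := by
        rw [hm]; field_simp
      have hs2 : s ^ 2 = 1 - c ^ 2 := by have := hcase1 hcpos.le; linarith
      refine hsqle _ _ dist_nonneg (by positivity) ?_
      rw [hdist, ← hL]
      nlinarith [sq_nonneg (m * ‖x‖), mul_nonneg (mul_nonneg hs0 hε.le) (sq_nonneg (m * ‖x‖)), sq_nonneg ε]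
    · -- c ≤ 0 : s = 1
      have hseq : s = 1 := hcase2 hcle
      set L := l * ‖y‖ with hL
      have hL0 : 0 ≤ L := by positivity
      refine ⟨L / (ε * ‖x‖), by positivity, ?_⟩
      set m := L / (ε * ‖x‖) with hm
      have ht0 : 0 ≤ m * ‖x‖ := by positivity
      have htε : ε * (m * ‖x‖) = L := by
        rw [hm]; field_simp
      refine hsqle _ _ dist_nonneg (by positivity) ?_
      rw [hdist, ← hL, hseq]
      nlinarith [mul_nonneg (mul_nonneg ht0 hL0) (by linarith : (0:ℝ) ≤ c + 1)]
  have hbdd : BddBelow {α : ℝ | 0 ≤ α ∧ ∃ a : ℝ, 0 ≤ a ∧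
      {p : E | ∃ l : ℝ, 0 ≤ l ∧ p = l • y} ⊆
        cone (0:E) {p | ∃ l : ℝ, 0 ≤ l ∧ p = l • x} α a} :=
    ⟨0, fun α hα => hα.1⟩
  rw [sPlus]
  apply le_antisymm
  · apply le_of_forall_pos_le_add
    intro ε hε
    exact csInf_le hbdd (hmem ε hε)
  · apply le_csInf ⟨s + 1, hmem 1 one_pos⟩
    rintro b ⟨hb0, a, ha0, hsub⟩
    by_contra hlt
    push_neg at hlt
    have hb1 : b < 1 := lt_of_lt_of_le hlt hs1
    rcases lt_or_ge c 0 with hcneg | hcpos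
    · -- c < 0
      have hnc : 0 < -c := neg_pos.mpr hcneg
      obtain ⟨L, hLdef⟩ : ∃ L : ℝ, L = a + 1 + a / (-c) := ⟨_, rfl⟩
      have hdiv : 0 ≤ a / (-c) := div_nonneg ha0 hnc.le
      have hL1 : a + 1 ≤ L := by rw [hLdef]; linarith
      have hL0 : 0 < L := by linarith
      have hl0 : 0 ≤ L / ‖y‖ := by positivity
      obtain ⟨m, hm, hd⟩ := (hcone b a _).mp (hsub ⟨L / ‖y‖, hl0, rfl⟩)
      have hly : L / ‖y‖ * ‖y‖ = L := by field_simp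
      have ht0 : 0 ≤ m * ‖x‖ := by positivity
      have hsq : dist ((L / ‖y‖) • y) (m • x) ^ 2 ≤ (b * (m * ‖x‖) + a) ^ 2 :=
        pow_le_pow_left₀ dist_nonneg hd 2
      rw [hdist, hly] at hsq
      clear hsub hcone hmem hbdd hdist hdist0 hinner hsqle hcase1 hcase2 hd hl0 hly
      have hLc : L * c = c * (a + 1) - a := by
        rw [hLdef]; field_simp [hcneg.ne]; ring
      have hba : b * a ≤ a := mul_le_of_le_one_left ha0 hb1.le
      have hLca : L * c + b * a ≤ 0 := by
        have hca : c * (a + 1) ≤ 0 :=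
          mul_nonpos_iff.mpr (Or.inr ⟨hcneg.le, by linarith⟩)
        linarith
      have e1 : 0 ≤ (1 - b ^ 2) * (m * ‖x‖) ^ 2 :=
        mul_nonneg (by nlinarith) (sq_nonneg _)
      have e2 : 0 ≤ (2 * (m * ‖x‖)) * (-(L * c + b * a)) :=
        mul_nonneg (by linarith) (by linarith)
      have e3 : a ^ 2 < L ^ 2 := by nlinarith
      nlinarith [hsq, e1, e2, e3]
    · -- c ≥ 0
      have hs2 : s ^ 2 = 1 - c ^ 2 := by have := hcase1 hcpos; linarith
      have hδ : 0 < 1 - b ^ 2 - c ^ 2 := by nlinarith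
      obtain ⟨δ, hδdef⟩ : ∃ δ : ℝ, δ = 1 - b ^ 2 - c ^ 2 := ⟨_, rfl⟩
      rw [← hδdef] at hδ
      obtain ⟨L, hLdef⟩ : ∃ L : ℝ, L = 3 * (a + 1) / δ + a + 1 := ⟨_, rfl⟩
      have hdiv : 0 ≤ 3 * (a + 1) / δ := by positivity
      have hL1 : a + 1 ≤ L := by rw [hLdef]; linarith
      have hL0 : 0 < L := by linarith
      have hl0 : 0 ≤ L / ‖y‖ := by positivity
      obtain ⟨m, hm, hd⟩ := (hcone b a _).mp (hsub ⟨L / ‖y‖, hl0, rfl⟩)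
      have hly : L / ‖y‖ * ‖y‖ = L := by field_simp
      have ht0 : 0 ≤ m * ‖x‖ := by positivity
      have hsq : dist ((L / ‖y‖) • y) (m • x) ^ 2 ≤ (b * (m * ‖x‖) + a) ^ 2 :=
        pow_le_pow_left₀ dist_nonneg hd 2
      rw [hdist, hly] at hsq
      clear hsub hcone hmem hbdd hdist hdist0 hinner hsqle hcase1 hcase2 hd hl0 hly
      have hkey : (1 - b ^ 2) * (L ^ 2 - a ^ 2) ≤ (L * c + b * a) ^ 2 := by
        nlinarith [hsq, sq_nonneg ((1 - b ^ 2) * (m * ‖x‖) - (L * c + b * a))]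
      have h4 : δ * L ^ 2 ≤ 2 * L * (c * b) * a + a ^ 2 := by
        rw [hδdef]; nlinarith [hkey]
      have h5 : c * b ≤ 1 := by nlinarith
      have h6 : δ * L ^ 2 ≤ 3 * (a + 1) * L := by
        nlinarith [mul_nonneg (mul_nonneg hL0.le ha0) (sub_nonneg.mpr h5),
          mul_nonneg ha0 (by linarith : (0:ℝ) ≤ L - a), hL0]
      have h7 : δ * L ≤ 3 * (a + 1) := by nlinarith [h6, hL0]
      have h8 : δ * L = 3 * (a + 1) + δ * (a + 1) := by
        rw [hLdef]; field_simp; ring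
      nlinarith [h7, h8, hδ, ha0]


theorem stmt12 {n : ℕ} (x y : EuclideanSpace ℝ (Fin n)) (hx : x ≠ 0) (hy : y ≠ 0) :
    sFun (0 : EuclideanSpace ℝ (Fin n))
        {p | ∃ l : ℝ, 0 ≤ l ∧ p = l • x} {p | ∃ l : ℝ, 0 ≤ l ∧ p = l • y} =
      Real.sin (min (Real.pi / 2) (InnerProductGeometry.angle x y)) := by
  rw [sFun, key x y hx hy, key y x hy hx, InnerProductGeometry.angle_comm y x, max_self]
end

section
/- Let 𝔤 be a finite-dimensional real nilpotent Lie algebra of nilpotency class c, with descending central series 𝔤 = 𝔤₁ ⊇ ⋯ ⊇ 𝔤_c ⊋ 𝔤_{c+1} = 0, complements V_n with 𝔤_n = V_n ⊕ 𝔤_{n+1}, projections π_n : 𝔤 → V_n, norms ‖·‖_n on V_n, and gauge |x| = max_n ‖π_n(x)‖^{1/n}. Then: |−x| = |x|; |x+y| ≤ |x| + |y|; if x ∈ 𝔤_n and α ≥ 1 then |αx| ≤ α^{1/n}|x|; and if 0 ≤ α ≤ 1 then |αx| ≤ α^{1/c}|x|. In particular |αx| ≤ max{1,α}·|x| for all α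 ≥ 0. -/
/-- The homogeneous gauge `|x| = max_{1 ≤ n ≤ c} ‖π_n x‖_n^{1/n}` associated to the
choice of complements `V_n` of the descending central series, projections `π n`, and
norms `N n`. -/
noncomputable def nilGauge {L : Type*} [LieRing L] [LieAlgebra ℝ L]
    (c : ℕ) (π : ℕ → L →ₗ[ℝ] L) (N : ℕ → L → ℝ) (x : L) : ℝ :=
  sSup {r : ℝ | ∃ n : ℕ, 1 ≤ n ∧ n ≤ c ∧ r = N n (π n x) ^ ((1 : ℝ) / n)}

lemma real_rpow_add_le {a b p : ℝ} (ha : 0 ≤ a) (hb : 0 ≤ b) (hp : 0 ≤ p) (hp1 : p ≤ 1) :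
    (a + b) ^ p ≤ a ^ p + b ^ p := by
  lift a to NNReal using ha
  lift b to NNReal using hb
  exact_mod_cast NNReal.rpow_add_le_add_rpow a b hp hp1

section helpers

variable {L : Type*} [LieRing L] [LieAlgebra ℝ L]
  (c : ℕ) (π : ℕ → L →ₗ[ℝ] L) (N : ℕ → L → ℝ)

lemma nilGauge_bddAbove (x : L) :
    BddAbove {r : ℝ | ∃ n : ℕ, 1 ≤ n ∧ n ≤ c ∧ r = N n (π n x) ^ ((1 : ℝ) / n)} := by
  apply Set.Finite.bddAbove
  apply Set.Finite.subset ((Set.finite_Icc 1 c).image fun n => N n (π n x) ^ ((1 : ℝ) / n))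
  rintro r ⟨n, h1, h2, rfl⟩
  exact ⟨n, ⟨h1, h2⟩, rfl⟩

lemma le_nilGauge {n : ℕ} (h1 : 1 ≤ n) (h2 : n ≤ c) (x : L) :
    N n (π n x) ^ ((1 : ℝ) / n) ≤ nilGauge c π N x :=
  le_csSup (nilGauge_bddAbove c π N x) ⟨n, h1, h2, rfl⟩

lemma nilGauge_le (hc : 1 ≤ c) {x : L} {M : ℝ}
    (h : ∀ n : ℕ, 1 ≤ n → n ≤ c → N n (π n x) ^ ((1 : ℝ) / n) ≤ M) :
    nilGauge c π N x ≤ M := by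
  unfold nilGauge
  refine csSup_le ⟨_, c, hc, le_rfl, rfl⟩ ?_
  rintro r ⟨n, h1, h2, rfl⟩
  exact h n h1 h2

lemma nilGauge_nonneg (hc : 1 ≤ c) (hN0 : ∀ (n : ℕ) (y : L), 0 ≤ N n y) (x : L) :
    0 ≤ nilGauge c π N x :=
  le_trans (Real.rpow_nonneg (hN0 c (π c x)) _) (le_nilGauge c π N hc le_rfl x)

end helpers

theorem stmt17 {L : Type*} [LieRing L] [LieAlgebra ℝ L] [FiniteDimensional ℝ L]
    (c : ℕ) (hc : 1 ≤ c)
    (hnilp : LieModule.lowerCentralSeries ℝ L L c = ⊥)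
    (hnontriv : LieModule.lowerCentralSeries ℝ L L (c - 1) ≠ ⊥)
    (V : ℕ → Submodule ℝ L) (π : ℕ → L →ₗ[ℝ] L)
    -- `V n` is a complement of `𝔤_{n+1}` in `𝔤_n` (here `𝔤_n` = lower central series at `n-1`)
    (hVsup : ∀ n : ℕ, 1 ≤ n → n ≤ c →
      (LieModule.lowerCentralSeries ℝ L L (n - 1)).toSubmodule =
        V n ⊔ (LieModule.lowerCentralSeries ℝ L L n).toSubmodule)
    (hVdisj : ∀ n : ℕ, 1 ≤ n → n ≤ c →
      V n ⊓ (LieModule.lowerCentralSeries ℝ L L n).toSubmodule = ⊥)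
    -- `π n` is the canonical projection onto `V n`
    (hπV : ∀ (n : ℕ) (x : L), π n x ∈ V n)
    (hπid : ∀ (n : ℕ) (x : L), x ∈ V n → π n x = x)
    (hπvanish : ∀ (n m : ℕ) (x : L), 1 ≤ n →
      x ∈ LieModule.lowerCentralSeries ℝ L L (n - 1) → m < n → π m x = 0)
    -- `N n` is a norm (restricting to the norm `‖·‖_n` on `V n`)
    (N : ℕ → L → ℝ)
    (hN0 : ∀ (n : ℕ) (x : L), 0 ≤ N n x)
    (hNadd : ∀ (n : ℕ) (x y : L), N n (x + y) ≤ N n x + N n y)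
    (hNsmul : ∀ (n : ℕ) (α : ℝ) (x : L), N n (α • x) = |α| * N n x) :
    (∀ x : L, nilGauge c π N (-x) = nilGauge c π N x) ∧
    (∀ x y : L, nilGauge c π N (x + y) ≤ nilGauge c π N x + nilGauge c π N y) ∧
    (∀ (n : ℕ) (x : L) (α : ℝ), 1 ≤ n → n ≤ c →
      x ∈ LieModule.lowerCentralSeries ℝ L L (n - 1) → 1 ≤ α →
      nilGauge c π N (α • x) ≤ α ^ ((1 : ℝ) / n) * nilGauge c π N x) ∧
    (∀ (x : L) (α : ℝ), 0 ≤ α → α ≤ 1 →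
      nilGauge c π N (α • x) ≤ α ^ ((1 : ℝ) / c) * nilGauge c π N x) ∧
    (∀ (x : L) (α : ℝ), 0 ≤ α →
      nilGauge c π N (α • x) ≤ max 1 α * nilGauge c π N x) := by
  have hNneg : ∀ (n : ℕ) (x : L), N n (-x) = N n x := by
    intro n x
    have := hNsmul n (-1) x
    simpa using this
  have hgneg : ∀ x : L, nilGauge c π N (-x) = nilGauge c π N x := by
    intro x
    have hset : ∀ (n : ℕ), N n (π n (-x)) = N n (π n x) := by
      intro n; rw [map_neg, hNneg]
    unfold nilGauge
    congr 1
    ext r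
    constructor <;> rintro ⟨n, h1, h2, rfl⟩ <;> exact ⟨n, h1, h2, by rw [hset]⟩
  have hnonneg := nilGauge_nonneg c π N hc hN0
  -- triangle inequality
  have htri : ∀ x y : L, nilGauge c π N (x + y) ≤ nilGauge c π N x + nilGauge c π N y := by
    intro x y
    apply nilGauge_le c π N hc
    intro n h1 h2
    have hnpos : (0 : ℝ) < n := by exact_mod_cast h1
    have hp0 : (0 : ℝ) ≤ 1 / n := by positivity
    have hp1 : (1 : ℝ) / n ≤ 1 := by
      rw [div_le_one hnpos]; exact_mod_cast h1
    calc N n (π n (x + y)) ^ ((1 : ℝ) / n)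
        ≤ (N n (π n x) + N n (π n y)) ^ ((1 : ℝ) / n) := by
          apply Real.rpow_le_rpow (hN0 _ _) _ hp0
          rw [map_add]; exact hNadd _ _ _
      _ ≤ N n (π n x) ^ ((1 : ℝ) / n) + N n (π n y) ^ ((1 : ℝ) / n) :=
          real_rpow_add_le (hN0 _ _) (hN0 _ _) hp0 hp1
      _ ≤ nilGauge c π N x + nilGauge c π N y :=
          add_le_add (le_nilGauge c π N h1 h2 x) (le_nilGauge c π N h1 h2 y)
  -- scaling for α ≥ 1, x deep in the series
  have hscale : ∀ (n : ℕ) (x : L) (α : ℝ), 1 ≤ n → n ≤ c →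
      x ∈ LieModule.lowerCentralSeries ℝ L L (n - 1) → 1 ≤ α →
      nilGauge c π N (α • x) ≤ α ^ ((1 : ℝ) / n) * nilGauge c π N x := by
    intro n x α h1 h2 hx hα
    have hα0 : (0 : ℝ) ≤ α := le_trans zero_le_one hα
    apply nilGauge_le c π N hc
    intro m hm1 hm2
    rcases lt_or_ge m n with hmn | hmn
    · -- π m (α • x) = 0
      have hmem : α • x ∈ LieModule.lowerCentralSeries ℝ L L (n - 1) :=
        Submodule.smul_mem _ _ hx
      have h0 : π m (α • x) = 0 := hπvanish n m (α • x) h1 hmem hmn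
      have hN00 : N m (0 : L) = 0 := by
        have := hNsmul m 0 0; simpa using this
      rw [h0, hN00]
      have hmpos : (0 : ℝ) < m := by exact_mod_cast hm1
      rw [Real.zero_rpow (by positivity)]
      exact mul_nonneg (Real.rpow_nonneg hα0 _) (hnonneg x)
    · -- m ≥ n
      have hmpos : (0 : ℝ) < m := by exact_mod_cast hm1
      rw [map_smul, hNsmul, abs_of_nonneg hα0,
        Real.mul_rpow hα0 (hN0 _ _)]
      have h1m : α ^ ((1 : ℝ) / m) ≤ α ^ ((1 : ℝ) / n) := by
        apply Real.rpow_le_rpow_of_exponent_le hα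
        apply div_le_div_of_nonneg_left zero_le_one (by exact_mod_cast lt_of_lt_of_le Nat.zero_lt_one h1)
        exact_mod_cast hmn
      exact mul_le_mul h1m (le_nilGauge c π N hm1 hm2 x)
        (Real.rpow_nonneg (hN0 _ _) _) (by positivity)
  -- scaling for 0 ≤ α ≤ 1
  have hshrink : ∀ (x : L) (α : ℝ), 0 ≤ α → α ≤ 1 →
      nilGauge c π N (α • x) ≤ α ^ ((1 : ℝ) / c) * nilGauge c π N x := by
    intro x α hα0 hα1
    apply nilGauge_le c π N hc
    intro m hm1 hm2
    have hmpos : (0 : ℝ) < m := by exact_mod_cast hm1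
    have hcpos : (0 : ℝ) < c := by exact_mod_cast hc
    rw [map_smul, hNsmul, abs_of_nonneg hα0, Real.mul_rpow hα0 (hN0 _ _)]
    have h1m : α ^ ((1 : ℝ) / m) ≤ α ^ ((1 : ℝ) / c) := by
      rcases eq_or_lt_of_le hα0 with h | h
      · rw [← h, Real.zero_rpow (by positivity), Real.zero_rpow (by positivity)]
      · apply Real.rpow_le_rpow_of_exponent_ge h hα1
        apply div_le_div_of_nonneg_left zero_le_one hmpos
        exact_mod_cast hm2
    exact mul_le_mul h1m (le_nilGauge c π N hm1 hm2 x)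
      (Real.rpow_nonneg (hN0 _ _) _) (Real.rpow_nonneg hα0 _)
  refine ⟨hgneg, htri, hscale, hshrink, ?_⟩
  intro x α hα0
  rcases le_or_gt α 1 with h | h
  · calc nilGauge c π N (α • x) ≤ α ^ ((1 : ℝ) / c) * nilGauge c π N x := hshrink x α hα0 h
      _ ≤ 1 * nilGauge c π N x := by
          apply mul_le_mul_of_nonneg_right (Real.rpow_le_one hα0 h (by positivity)) (hnonneg x)
      _ ≤ max 1 α * nilGauge c π N x :=
          mul_le_mul_of_nonneg_right (le_max_left 1 α) (hnonneg x)
  · have hx1 : x ∈ LieModule.lowerCentralSeries ℝ L L (1 - 1) := by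
      simp [LieModule.lowerCentralSeries]
    have key := hscale 1 x α le_rfl hc hx1 h.le
    rw [Nat.cast_one, div_one, Real.rpow_one] at key
    exact key.trans (mul_le_mul_of_nonneg_right (le_max_right 1 α) (hnonneg x))
end
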